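/- arXiv:2409.15743 — 3 statements merged into one kernel-verified Lean document; each statement's English description precedes it below -/
import Mathlib

section
/- For f ∈ ℓ²(ℕ) real or complex with a(f) = ∑ₖ f̄ₖ aₖ and a†(f) = ∑ₖ fₖ aₖ†, the commutator [a(f), a†(f)] acts on each occupancy-number basis vector |n⟩ of the Bose–Fock space as multiplication by ‖f‖²: [a(f), a†(f)] |n⟩ = ‖f‖² |n⟩. -/
/-- The occupancy-number basis vector `|n⟩` of the Bose–Fock space
(as a coefficient function over occupancy configurations). -/
def fockBasis (n : ℕ →₀ ℕ) : (ℕ →₀ ℕ) → ℂ := fun m => if m = n then 1 else 0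

/-- The smeared annihilation operator `a(f) = ∑ₖ f̄ₖ aₖ`, acting on coefficient functions:
`(a(f)ψ)(m) = ∑ₖ f̄ₖ √(mₖ+1) ψ(m + δₖ)`, corresponding to `aₖ|n⟩ = √nₖ |n(nₖ→nₖ−1)⟩`. -/
noncomputable def fockAnn (f : ℕ → ℂ) (ψ : (ℕ →₀ ℕ) → ℂ) : (ℕ →₀ ℕ) → ℂ :=
  fun m => ∑' k : ℕ,
    (starRingEnd ℂ) (f k) * (Real.sqrt ((m k : ℝ) + 1) : ℂ) * ψ (m + Finsupp.single k 1)

/-- The smeared creation operator `a†(f) = ∑ₖ fₖ aₖ†`, acting on coefficient functions: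
`(a†(f)ψ)(m) = ∑ₖ fₖ √mₖ ψ(m − δₖ)`, corresponding to `aₖ†|n⟩ = √(nₖ+1) |n(nₖ→nₖ+1)⟩`. -/
noncomputable def fockCre (f : ℕ → ℂ) (ψ : (ℕ →₀ ℕ) → ℂ) : (ℕ →₀ ℕ) → ℂ :=
  fun m => ∑' k : ℕ, f k * (Real.sqrt (m k : ℝ) : ℂ) * ψ (m - Finsupp.single k 1)

/-!
Evaluated at a configuration `m`, both `a(f) a†(f) |n⟩` and `a†(f) a(f) |n⟩` only see pairs
`(k, j)` with `m + δₖ = n + δⱼ`. For `m ≠ n` there is at most one such pair, and both orders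
produce the same amplitude `f̄ₖ fⱼ √(nₖ) √(mⱼ)`, so the commutator vanishes there. At `m = n`
the pairs are `(k, k)`: one order gives `∑ₖ |fₖ|² (nₖ + 1)`, the other `∑ₖ |fₖ|² nₖ`, a finite
sum since `n` has finite support, and their difference is `‖f‖²`.
-/

open Finsupp ComplexConjugate

section Occupancy

variable {ι : Type*} {m n : ι →₀ ℕ} {j k : ι}

theorem Finsupp.single_one_le_of_ne_zero (hk : m k ≠ 0) : single k 1 ≤ m :=
  single_le_iff.2 (Nat.pos_of_ne_zero hk)

theorem Finsupp.add_single_eq_of_tsub_single_add_single_eq (hj : m j ≠ 0)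
    (h : m - single j 1 + single k 1 = n) : m + single k 1 = n + single j 1 := by
  rw [← h, add_right_comm, tsub_add_cancel_of_le (single_one_le_of_ne_zero hj)]

theorem Finsupp.tsub_single_eq_tsub_single_of_add_single_eq
    (h : m + single k 1 = n + single j 1) : m - single j 1 = n - single k 1 :=
  calc m - single j 1 = m + single k 1 - single k 1 - single j 1 := by rw [add_tsub_cancel_right]
    _ = m + single k 1 - single j 1 - single k 1 := tsub_right_comm
    _ = n - single k 1 := by rw [h, add_tsub_cancel_right]

theorem Finsupp.apply_add_one_of_add_single_eq (hkj : k ≠ j)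
    (h : m + single k 1 = n + single j 1) : m k + 1 = n k := by
  simpa [single_apply, hkj.symm] using DFunLike.congr_fun h k

theorem Finsupp.tsub_eq_single_of_add_single_eq (hkj : k ≠ j)
    (h : m + single k 1 = n + single j 1) : n - m = single k 1 := by
  classical
  ext i
  have hi := DFunLike.congr_fun h i
  simp only [coe_add, coe_tsub, Pi.add_apply, Pi.sub_apply, single_apply] at hi ⊢
  split_ifs at hi ⊢ with hik hij <;> first | omega | exact absurd (hik.trans hij.symm) hkj

/-- Off the diagonal, `m + δₖ = n + δⱼ` determines `k` as the place where `n` exceeds `m`,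
and `j` as the place where `m` exceeds `n`. -/
theorem Finsupp.eq_and_eq_of_add_single_eq {k' j' : ι} (hkj : k ≠ j)
    (h : m + single k 1 = n + single j 1) (h' : m + single k' 1 = n + single j' 1) :
    k = k' ∧ j = j' := by
  have hkj' : k' ≠ j' := by
    rintro rfl
    rw [add_right_cancel h'] at h
    exact hkj (single_left_injective one_ne_zero (add_left_cancel h))
  constructor
  · apply single_left_injective (one_ne_zero (α := ℕ))
    dsimp only
    rw [← tsub_eq_single_of_add_single_eq hkj h, tsub_eq_single_of_add_single_eq hkj' h']
  · apply single_left_injective (one_ne_zero (α := ℕ))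
    dsimp only
    rw [← tsub_eq_single_of_add_single_eq hkj.symm h.symm,
      tsub_eq_single_of_add_single_eq hkj'.symm h'.symm]

end Occupancy

theorem tsum_mul_add_one_sub_tsum_mul {ι : Type*} {a : ι → ℝ} (ha : Summable a) (n : ι →₀ ℕ) :
    ∑' k, a k * ((n k : ℝ) + 1) - ∑' k, a k * n k = ∑' k, a k := by
  have han : Summable fun k => a k * n k :=
    summable_of_ne_finset_zero (s := n.support) fun k hk => by simp [notMem_support_iff.mp hk]
  rw [← ((han.add ha).congr fun k => by ring).tsum_sub han]
  exact tsum_congr fun k => by ring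

theorem conj_mul_sqrt_mul_mul_sqrt (z : ℂ) {x : ℝ} (hx : 0 ≤ x) :
    conj z * (√x : ℂ) * (z * (√x : ℂ)) = ((‖z‖ ^ 2 * x : ℝ) : ℂ) := by
  rw [mul_mul_mul_comm, ← Complex.normSq_eq_conj_mul_self, ← Complex.ofReal_mul,
    Real.mul_self_sqrt hx, Complex.normSq_eq_norm_sq, Complex.ofReal_mul]

section FockBasis

variable (f : ℕ → ℂ) (n : ℕ →₀ ℕ)

theorem fockCre_fockBasis_apply (p : ℕ →₀ ℕ) :
    fockCre f (fockBasis n) p =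
      ∑' k, if p = n + single k 1 then f k * (√((n k : ℝ) + 1) : ℂ) else 0 := by
  refine tsum_congr fun k => ?_
  rcases eq_or_ne (p k) 0 with hpk | hpk
  · have hp : p ≠ n + single k 1 := fun hp => by simp [hp] at hpk
    simp [hpk, hp]
  · simp only [fockBasis, tsub_eq_iff_eq_add_of_le (single_one_le_of_ne_zero hpk)]
    split_ifs with hp
    · simp [hp]
    · simp

theorem fockCre_fockBasis_add_single (j : ℕ) :
    fockCre f (fockBasis n) (n + single j 1) = f j * (√((n j : ℝ) + 1) : ℂ) := by
  simp_rw [fockCre_fockBasis_apply, add_right_inj,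
    (single_left_injective (one_ne_zero (α := ℕ))).eq_iff, eq_comm (a := j)]
  exact tsum_ite_eq j _

theorem fockCre_fockBasis_eq_zero {p : ℕ →₀ ℕ} (hp : ∀ j, p ≠ n + single j 1) :
    fockCre f (fockBasis n) p = 0 := by
  simp [fockCre_fockBasis_apply, hp]

theorem fockAnn_fockBasis_apply (p : ℕ →₀ ℕ) :
    fockAnn f (fockBasis n) p =
      ∑' k, if p + single k 1 = n then conj (f k) * (√(n k : ℝ) : ℂ) else 0 := by
  refine tsum_congr fun k => ?_
  split_ifs with hp
  · simp [fockBasis, ← hp]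
  · simp [fockBasis, hp]

theorem fockAnn_fockBasis_tsub_single {k : ℕ} (hk : n k ≠ 0) :
    fockAnn f (fockBasis n) (n - single k 1) = conj (f k) * (√(n k : ℝ) : ℂ) := by
  have hle : single k 1 ≤ n := single_one_le_of_ne_zero hk
  have hiff (k' : ℕ) : n - single k 1 + single k' 1 = n ↔ k' = k := by
    nth_rw 2 [← tsub_add_cancel_of_le hle]
    rw [add_right_inj, (single_left_injective (one_ne_zero (α := ℕ))).eq_iff]
  simp_rw [fockAnn_fockBasis_apply, hiff]
  exact tsum_ite_eq k _

theorem fockAnn_fockBasis_eq_zero {p : ℕ →₀ ℕ} (hp : ∀ k, p + single k 1 ≠ n) :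
    fockAnn f (fockBasis n) p = 0 := by
  simp [fockAnn_fockBasis_apply, hp]

end FockBasis

section Commutator

variable (f : ℕ → ℂ)

theorem fockAnn_fockCre_fockBasis_self (n : ℕ →₀ ℕ) :
    fockAnn f (fockCre f (fockBasis n)) n = ∑' k, ((‖f k‖ ^ 2 * ((n k : ℝ) + 1) : ℝ) : ℂ) :=
  tsum_congr fun k => by
    rw [fockCre_fockBasis_add_single, conj_mul_sqrt_mul_mul_sqrt _ (by positivity)]

theorem fockCre_fockAnn_fockBasis_self (n : ℕ →₀ ℕ) :
    fockCre f (fockAnn f (fockBasis n)) n = ∑' k, ((‖f k‖ ^ 2 * n k : ℝ) : ℂ) := by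
  refine tsum_congr fun k => ?_
  rcases eq_or_ne (n k) 0 with hk | hk
  · simp [hk]
  · rw [fockAnn_fockBasis_tsub_single f n hk, mul_comm,
      conj_mul_sqrt_mul_mul_sqrt _ (by positivity)]

variable {m n : ℕ →₀ ℕ} {j k : ℕ} (hkj : k ≠ j) (h : m + single k 1 = n + single j 1)
include hkj h

theorem fockAnn_fockCre_fockBasis_of_add_single_eq :
    fockAnn f (fockCre f (fockBasis n)) m =
      conj (f k) * (√((m k : ℝ) + 1) : ℂ) * (f j * (√((n j : ℝ) + 1) : ℂ)) := by
  rw [fockAnn, tsum_eq_single k fun k' hk' => ?_, h, fockCre_fockBasis_add_single]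
  rw [fockCre_fockBasis_eq_zero f n fun j' h' => hk' (eq_and_eq_of_add_single_eq hkj h h').1.symm,
    mul_zero]

theorem fockCre_fockAnn_fockBasis_of_add_single_eq :
    fockCre f (fockAnn f (fockBasis n)) m =
      f j * (√(m j : ℝ) : ℂ) * (conj (f k) * (√(n k : ℝ) : ℂ)) := by
  rw [fockCre, tsum_eq_single j fun j' hj' => ?_, tsub_single_eq_tsub_single_of_add_single_eq h,
    fockAnn_fockBasis_tsub_single f n (apply_add_one_of_add_single_eq hkj h ▸ (m k).succ_ne_zero)]
  rcases eq_or_ne (m j') 0 with hj'0 | hj'0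
  · simp [hj'0]
  · rw [fockAnn_fockBasis_eq_zero f n fun k' h' => hj' (eq_and_eq_of_add_single_eq hkj h
      (add_single_eq_of_tsub_single_add_single_eq hj'0 h')).2.symm, mul_zero]

theorem fockAnn_fockCre_fockBasis_eq_fockCre_fockAnn_of_add_single_eq :
    fockAnn f (fockCre f (fockBasis n)) m = fockCre f (fockAnn f (fockBasis n)) m := by
  have hk : ((n k : ℕ) : ℝ) = m k + 1 := mod_cast (apply_add_one_of_add_single_eq hkj h).symm
  have hj : ((m j : ℕ) : ℝ) = n j + 1 :=
    mod_cast (apply_add_one_of_add_single_eq hkj.symm h.symm).symm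
  rw [fockAnn_fockCre_fockBasis_of_add_single_eq f hkj h,
    fockCre_fockAnn_fockBasis_of_add_single_eq f hkj h, hk, hj]
  ring

omit hkj h

theorem fockAnn_fockCre_fockBasis_eq_zero (hmn : ∀ k j, m + single k 1 ≠ n + single j 1) :
    fockAnn f (fockCre f (fockBasis n)) m = 0 := by
  have hzero (k : ℕ) := fockCre_fockBasis_eq_zero f n (hmn k)
  simp [fockAnn, hzero]

theorem fockCre_fockAnn_fockBasis_eq_zero (hmn : ∀ k j, m + single k 1 ≠ n + single j 1) :
    fockCre f (fockAnn f (fockBasis n)) m = 0 := by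
  refine (tsum_congr fun j => ?_).trans tsum_zero
  rcases eq_or_ne (m j) 0 with hj | hj
  · simp [hj]
  · rw [fockAnn_fockBasis_eq_zero f n fun k h => hmn k j
      (add_single_eq_of_tsub_single_add_single_eq hj h), mul_zero]

theorem fockAnn_fockCre_fockBasis_eq_fockCre_fockAnn_of_ne (hmn : m ≠ n) :
    fockAnn f (fockCre f (fockBasis n)) m = fockCre f (fockAnn f (fockBasis n)) m := by
  by_cases hex : ∃ k j, m + single k 1 = n + single j 1
  · obtain ⟨k, j, h⟩ := hex
    have hkj : k ≠ j := by
      rintro rfl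
      exact hmn (add_right_cancel h)
    exact fockAnn_fockCre_fockBasis_eq_fockCre_fockAnn_of_add_single_eq f hkj h
  · push Not at hex
    rw [fockAnn_fockCre_fockBasis_eq_zero f hex, fockCre_fockAnn_fockBasis_eq_zero f hex]

end Commutator

/-- **Canonical commutation relation for smeared fields:** for `f ∈ ℓ²`,
`[a(f), a†(f)] |n⟩ = ‖f‖² |n⟩` on every occupancy-number basis vector `|n⟩`. -/
theorem fock_ccr_smeared (f : ℕ → ℂ) (hf : Summable fun k => ‖f k‖ ^ 2) (n : ℕ →₀ ℕ) :
    fockAnn f (fockCre f (fockBasis n)) - fockCre f (fockAnn f (fockBasis n)) =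
      ((∑' k : ℕ, ‖f k‖ ^ 2 : ℝ) : ℂ) • fockBasis n := by
  funext m
  simp only [Pi.sub_apply, Pi.smul_apply, smul_eq_mul, fockBasis]
  rcases eq_or_ne m n with rfl | hmn
  · rw [fockAnn_fockCre_fockBasis_self, fockCre_fockAnn_fockBasis_self, if_pos rfl, mul_one,
      ← Complex.ofReal_tsum, ← Complex.ofReal_tsum, ← Complex.ofReal_sub,
      tsum_mul_add_one_sub_tsum_mul hf]
  · rw [if_neg hmn, mul_zero, fockAnn_fockCre_fockBasis_eq_fockCre_fockAnn_of_ne f hmn, sub_self]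
end

section
/- With H_B = ∑ₖ ωₖaₖ†aₖ, m = inf_k ωₖ > 0, f ∈ ℓ², and Z(2β) = tr e^{−2βH_B} finite and differentiable, the Hilbert–Schmidt norm satisfies ‖a(f) e^{−βH_B}‖²_HS ≤ −(‖f‖²/m) (d/d(2β)) Z(2β). -/
/-- The Gibbs exponential `e^{−βH_B}` acting diagonally on the occupancy number basis. -/
noncomputable def fockGibbs (β : ℝ) (ω : ℕ → ℝ) (ψ : (ℕ →₀ ℕ) → ℂ) : (ℕ →₀ ℕ) → ℂ :=
  fun m => ((Real.exp (-β * (m.sum fun k v => ω k * (v : ℝ))) : ℝ) : ℂ) * ψ m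

/-- The partition function `Z(s) = tr e^{−sH_B} = ∑_n e^{−s ∑ₖ nₖωₖ}` as a function of `s`. -/
noncomputable def Ztr (ω : ℕ → ℝ) : ℝ → ℝ :=
  fun s => ∑' n : ℕ →₀ ℕ, Real.exp (-s * (n.sum fun k v => ω k * (v : ℝ)))

/-- Energy of an occupancy configuration. -/
noncomputable def fockE (ω : ℕ → ℝ) (n : ℕ →₀ ℕ) : ℝ := n.sum fun k v => ω k * (v : ℝ)

lemma fockE_nonneg (ω : ℕ → ℝ) (hω : ∀ k, 0 ≤ ω k) (n : ℕ →₀ ℕ) : 0 ≤ fockE ω n :=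
  Finset.sum_nonneg fun k _ => mul_nonneg (hω k) (Nat.cast_nonneg _)

lemma fockE_ge (ω : ℕ → ℝ) (m : ℝ) (hm : 0 < m) (hω : ∀ k, m ≤ ω k) (n : ℕ →₀ ℕ) (k : ℕ) :
    m * (n k : ℝ) ≤ fockE ω n := by
  by_cases hk : n k = 0
  · simp [hk]
    exact fockE_nonneg ω (fun j => hm.le.trans (hω j)) n
  · have hmem : k ∈ n.support := Finsupp.mem_support_iff.2 hk
    have h1 : ω k * (n k : ℝ) ≤ fockE ω n :=
      Finset.single_le_sum (f := fun j => ω j * (n j : ℝ))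
        (fun j _ => mul_nonneg (hm.le.trans (hω j)) (Nat.cast_nonneg _)) hmem
    have h2 : m * (n k : ℝ) ≤ ω k * (n k : ℝ) :=
      mul_le_mul_of_nonneg_right (hω k) (Nat.cast_nonneg _)
    linarith

lemma fockAnn_gibbs_basis (β : ℝ) (ω : ℕ → ℝ) (f : ℕ → ℂ) (n x : ℕ →₀ ℕ) :
    fockAnn f (fockGibbs β ω (fockBasis n)) x =
      ∑ k ∈ n.support, (starRingEnd ℂ) (f k) * (Real.sqrt ((x k : ℝ) + 1) : ℂ) *
        (if x + Finsupp.single k 1 = n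
          then ((Real.exp (-β * fockE ω n) : ℝ) : ℂ) else 0) := by
  unfold fockAnn
  rw [tsum_eq_sum (s := n.support)]
  · apply Finset.sum_congr rfl
    intro k _
    congr 1
    unfold fockGibbs fockBasis fockE
    by_cases h : x + Finsupp.single k 1 = n
    · rw [if_pos h, if_pos h, h, mul_one]
    · rw [if_neg h, if_neg h, mul_zero]
  · intro k hk
    unfold fockGibbs fockBasis
    rw [if_neg, mul_zero, mul_zero]
    intro h
    apply hk
    rw [Finsupp.mem_support_iff]
    have := congrArg (fun g : ℕ →₀ ℕ => g k) h
    simp [Finsupp.add_apply, Finsupp.single_apply] at this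
    omega

/-- Slope bound: any finite partial sum of `E_n e^{-2βE_n}` is at most `-Z'(2β)`. -/
lemma deriv_bound (ω : ℕ → ℝ) (β : ℝ) (hβ : 0 < β) (hω0 : ∀ k, 0 ≤ ω k)
    (hZ : Summable fun n : ℕ →₀ ℕ => Real.exp (-(2 * β) * fockE ω n))
    (hdiff : DifferentiableAt ℝ (Ztr ω) (2 * β)) (F : Finset (ℕ →₀ ℕ)) :
    ∑ n ∈ F, fockE ω n * Real.exp (-(2 * β) * fockE ω n) ≤ -(deriv (Ztr ω) (2 * β)) := by
  set b := 2 * β with hbdef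
  have hE : ∀ n, 0 ≤ fockE ω n := fockE_nonneg ω hω0
  -- slope of Ztr tends to deriv on the right
  have hslopeφ : Filter.Tendsto (slope (Ztr ω) b) (nhdsWithin b (Set.Ioi b))
      (nhds (deriv (Ztr ω) b)) :=
    (hasDerivAt_iff_tendsto_slope.mp hdiff.hasDerivAt).mono_left
      (nhdsWithin_mono b (fun x hx => Set.mem_compl_singleton_iff.mpr (ne_of_gt hx)))
  -- slope of each exponential
  have hder : ∀ n : ℕ →₀ ℕ, HasDerivAt (fun t => Real.exp (-t * fockE ω n))
      (Real.exp (-b * fockE ω n) * (-1 * fockE ω n)) b := by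
    intro n
    have h1 : HasDerivAt (fun t : ℝ => -t * fockE ω n) (-1 * fockE ω n) b :=
      (hasDerivAt_id b).neg.mul_const _
    exact h1.exp
  have hslopeg : Filter.Tendsto
      (fun t => ∑ n ∈ F, slope (fun s => Real.exp (-s * fockE ω n)) b t)
      (nhdsWithin b (Set.Ioi b))
      (nhds (∑ n ∈ F, Real.exp (-b * fockE ω n) * (-1 * fockE ω n))) := by
    apply tendsto_finset_sum
    intro n _
    exact (hasDerivAt_iff_tendsto_slope.mp (hder n)).mono_left
      (nhdsWithin_mono b (fun x hx => Set.mem_compl_singleton_iff.mpr (ne_of_gt hx)))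
  have key : deriv (Ztr ω) b ≤ ∑ n ∈ F, Real.exp (-b * fockE ω n) * (-1 * fockE ω n) := by
    apply le_of_tendsto_of_tendsto hslopeφ hslopeg
    filter_upwards [self_mem_nhdsWithin] with t ht
    have htb : b < t := ht
    -- summability at t
    have hsumt : Summable (fun n : ℕ →₀ ℕ => Real.exp (-t * fockE ω n)) := by
      apply hZ.of_nonneg_of_le (fun n => (Real.exp_nonneg _))
      intro n
      apply Real.exp_le_exp.2
      have : -t ≤ -b := by linarith
      exact mul_le_mul_of_nonneg_right this (hE n)
    have hterm : ∀ n : ℕ →₀ ℕ, 0 ≤ Real.exp (-b * fockE ω n) - Real.exp (-t * fockE ω n) := by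
      intro n
      have : -t * fockE ω n ≤ -b * fockE ω n :=
        mul_le_mul_of_nonneg_right (by linarith) (hE n)
      simpa using Real.exp_le_exp.2 this
    have hkey : ∑ n ∈ F, (Real.exp (-b * fockE ω n) - Real.exp (-t * fockE ω n)) ≤
        Ztr ω b - Ztr ω t := by
      have heq : Ztr ω b - Ztr ω t =
          ∑' n : ℕ →₀ ℕ, (Real.exp (-b * fockE ω n) - Real.exp (-t * fockE ω n)) := by
        unfold Ztr fockE
        exact (Summable.tsum_sub hZ hsumt).symm
      rw [heq]
      exact Summable.sum_le_tsum F (fun n _ => hterm n) (hZ.sub hsumt)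
    -- turn into slope inequality
    have hpos : 0 < t - b := by linarith
    have h1 : slope (Ztr ω) b t = (Ztr ω t - Ztr ω b) / (t - b) := slope_def_field _ _ _
    have h2 : ∀ n : ℕ →₀ ℕ, slope (fun s => Real.exp (-s * fockE ω n)) b t =
        (Real.exp (-t * fockE ω n) - Real.exp (-b * fockE ω n)) / (t - b) :=
      fun n => slope_def_field _ _ _
    rw [h1]
    have hnum : Ztr ω t - Ztr ω b ≤
        ∑ n ∈ F, (Real.exp (-t * fockE ω n) - Real.exp (-b * fockE ω n)) := by
      rw [Finset.sum_sub_distrib] at hkey ⊢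
      linarith
    have h3 : (Ztr ω t - Ztr ω b) / (t - b) ≤
        (∑ n ∈ F, (Real.exp (-t * fockE ω n) - Real.exp (-b * fockE ω n))) / (t - b) := by
      gcongr
    calc (Ztr ω t - Ztr ω b) / (t - b)
        ≤ (∑ n ∈ F, (Real.exp (-t * fockE ω n) - Real.exp (-b * fockE ω n))) / (t - b) := h3
      _ = ∑ n ∈ F, slope (fun s => Real.exp (-s * fockE ω n)) b t := by
          rw [Finset.sum_div]
          exact Finset.sum_congr rfl fun n _ => (h2 n).symm
  have : ∑ n ∈ F, Real.exp (-b * fockE ω n) * (-1 * fockE ω n) =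
      -∑ n ∈ F, fockE ω n * Real.exp (-b * fockE ω n) := by
    rw [← Finset.sum_neg_distrib]
    exact Finset.sum_congr rfl fun n _ => by ring
  rw [this] at key
  linarith

/-- **Hilbert–Schmidt bound:** `‖a(f) e^{−βH_B}‖²_HS ≤ −(‖f‖²/m) (d/d(2β)) Z(2β)`,
the HS norm being computed as the double sum of squared coefficients over the occupancy
number basis. -/
theorem hs_bound_ann_gibbs (ω : ℕ → ℝ) (f : ℕ → ℂ) (m β : ℝ) (hm : 0 < m) (hω : ∀ k, m ≤ ω k) (hβ : 0 < β)
    (hf : Summable fun k => ‖f k‖ ^ 2)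
    (hsum : ∀ b > (0 : ℝ), Summable fun k => Real.exp (-b * ω k))
    (hp : ∀ p : ℕ, p ≤ 2 → Summable fun k => ω k ^ p * Real.exp (-(2 * β) * ω k))
    (hZ : Summable fun n : ℕ →₀ ℕ => Real.exp (-(2 * β) * (n.sum fun k v => ω k * (v : ℝ))))
    (hdiff : DifferentiableAt ℝ (Ztr ω) (2 * β)) :
    (∑' n : ℕ →₀ ℕ, ∑' x : ℕ →₀ ℕ, ‖fockAnn f (fockGibbs β ω (fockBasis n)) x‖ ^ 2) ≤
      (∑' k : ℕ, ‖f k‖ ^ 2) / m * (-(deriv (Ztr ω) (2 * β))) := by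
  have hω0 : ∀ k, 0 ≤ ω k := fun k => hm.le.trans (hω k)
  have hE : ∀ n, 0 ≤ fockE ω n := fockE_nonneg ω hω0
  set C : ℝ := ∑' k : ℕ, ‖f k‖ ^ 2 with hC
  have hC0 : 0 ≤ C := tsum_nonneg fun k => sq_nonneg _
  -- the inner sum computed
  have inner_eq : ∀ n : ℕ →₀ ℕ,
      (∑' x : ℕ →₀ ℕ, ‖fockAnn f (fockGibbs β ω (fockBasis n)) x‖ ^ 2) =
      (∑ k ∈ n.support, ‖f k‖ ^ 2 * (n k : ℝ)) * Real.exp (-(2 * β) * fockE ω n) := by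
    intro n
    have hinj : Set.InjOn (fun k => n - Finsupp.single k 1) n.support := by
      intro k1 hk1 k2 hk2 h
      by_contra hne
      have h1 := congrArg (fun g : ℕ →₀ ℕ => g k1) h
      have hk1' : n k1 ≠ 0 := Finsupp.mem_support_iff.1 hk1
      simp only [Finsupp.tsub_apply, Finsupp.single_apply] at h1
      split_ifs at h1 <;> omega
    -- value at n - single k 1
    have hval : ∀ k ∈ n.support,
        fockAnn f (fockGibbs β ω (fockBasis n)) (n - Finsupp.single k 1) =
        (starRingEnd ℂ) (f k) * (Real.sqrt (n k : ℝ) : ℂ) *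
          ((Real.exp (-β * fockE ω n) : ℝ) : ℂ) := by
      intro k hk
      have hk' : 1 ≤ n k := Nat.one_le_iff_ne_zero.2 (Finsupp.mem_support_iff.1 hk)
      rw [fockAnn_gibbs_basis]
      rw [Finset.sum_eq_single_of_mem k hk]
      · have hcond : (n - Finsupp.single k 1) + Finsupp.single k 1 = n := by
          ext l
          simp only [Finsupp.add_apply, Finsupp.tsub_apply, Finsupp.single_apply]
          by_cases hl : k = l
          · subst hl
            split_ifs <;> omega
          · split_ifs <;> omega
        rw [if_pos hcond]
        congr 2
        have happ : (n - Finsupp.single k 1 : ℕ →₀ ℕ) k = n k - 1 := by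
          rw [Finsupp.tsub_apply, Finsupp.single_eq_same]
        rw [happ]
        have : ((n k - 1 : ℕ) : ℝ) + 1 = (n k : ℝ) := by
          have : ((n k - 1 : ℕ) : ℝ) = (n k : ℝ) - 1 := by
            rw [Nat.cast_sub hk']; simp
          rw [this]; ring
        rw [this]
      · intro j hj hjk
        have hcond : ¬((n - Finsupp.single k 1) + Finsupp.single j 1 = n) := by
          intro hcond
          have h5 := congrArg (fun g : ℕ →₀ ℕ => g j) hcond
          simp only [Finsupp.add_apply, Finsupp.tsub_apply, Finsupp.single_apply] at h5
          split_ifs at h5 <;> omega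
        rw [if_neg hcond, mul_zero]
    -- off the image, the function vanishes
    have hzero : ∀ x : ℕ →₀ ℕ, x ∉ n.support.image (fun k => n - Finsupp.single k 1) →
        ‖fockAnn f (fockGibbs β ω (fockBasis n)) x‖ ^ 2 = 0 := by
      intro x hx
      rw [fockAnn_gibbs_basis]
      rw [Finset.sum_eq_zero, norm_zero]
      · ring
      · intro k hk
        have hcond : ¬(x + Finsupp.single k 1 = n) := by
          intro hcond
          apply hx
          rw [Finset.mem_image]
          refine ⟨k, ?_, ?_⟩
          · rw [Finsupp.mem_support_iff]
            have h6 := congrArg (fun g : ℕ →₀ ℕ => g k) hcond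
            simp only [Finsupp.add_apply, Finsupp.single_apply] at h6
            split_ifs at h6 <;> omega
          · ext l
            have h6 := congrArg (fun g : ℕ →₀ ℕ => g l) hcond
            simp only [Finsupp.add_apply, Finsupp.single_apply] at h6
            simp only [Finsupp.tsub_apply, Finsupp.single_apply]
            split_ifs at h6 ⊢ <;> omega
        rw [if_neg hcond, mul_zero]
    rw [tsum_eq_sum (s := n.support.image (fun k => n - Finsupp.single k 1)) hzero]
    rw [Finset.sum_image hinj]
    rw [Finset.sum_mul]
    apply Finset.sum_congr rfl
    intro k hk
    rw [hval k hk]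
    have hnk : (0:ℝ) ≤ (n k : ℝ) := Nat.cast_nonneg _
    rw [norm_mul, norm_mul, mul_pow]
    rw [mul_pow]
    have h1 : ‖(starRingEnd ℂ) (f k)‖ = ‖f k‖ := RCLike.norm_conj _
    have h2 : ‖((Real.sqrt (n k : ℝ) : ℝ) : ℂ)‖ ^ 2 = (n k : ℝ) := by
      rw [Complex.norm_real, Real.norm_eq_abs, abs_of_nonneg (Real.sqrt_nonneg _),
        Real.sq_sqrt hnk]
    have h3 : ‖((Real.exp (-β * fockE ω n) : ℝ) : ℂ)‖ ^ 2 =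
        Real.exp (-(2 * β) * fockE ω n) := by
      rw [Complex.norm_real, Real.norm_eq_abs, abs_of_nonneg (Real.exp_nonneg _),
        sq, ← Real.exp_add]
      congr 1
      ring
    rw [h1, h2, h3]
  -- pointwise bound
  have hbound : ∀ n : ℕ →₀ ℕ,
      (∑ k ∈ n.support, ‖f k‖ ^ 2 * (n k : ℝ)) * Real.exp (-(2 * β) * fockE ω n) ≤
      C / m * (fockE ω n * Real.exp (-(2 * β) * fockE ω n)) := by
    intro n
    have h1 : ∑ k ∈ n.support, ‖f k‖ ^ 2 * (n k : ℝ) ≤ C / m * fockE ω n := by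
      have h2 : ∀ k ∈ n.support, ‖f k‖ ^ 2 * (n k : ℝ) ≤ ‖f k‖ ^ 2 * (fockE ω n / m) := by
        intro k _
        apply mul_le_mul_of_nonneg_left _ (sq_nonneg _)
        rw [le_div_iff₀ hm]
        have := fockE_ge ω m hm hω n k
        linarith
      calc ∑ k ∈ n.support, ‖f k‖ ^ 2 * (n k : ℝ)
          ≤ ∑ k ∈ n.support, ‖f k‖ ^ 2 * (fockE ω n / m) := Finset.sum_le_sum h2
        _ = (∑ k ∈ n.support, ‖f k‖ ^ 2) * (fockE ω n / m) := by rw [Finset.sum_mul]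
        _ ≤ C * (fockE ω n / m) := by
            apply mul_le_mul_of_nonneg_right _ (div_nonneg (hE n) hm.le)
            exact Summable.sum_le_tsum n.support (fun k _ => sq_nonneg _) hf
        _ = C / m * fockE ω n := by ring
    calc (∑ k ∈ n.support, ‖f k‖ ^ 2 * (n k : ℝ)) * Real.exp (-(2 * β) * fockE ω n)
        ≤ (C / m * fockE ω n) * Real.exp (-(2 * β) * fockE ω n) :=
          mul_le_mul_of_nonneg_right h1 (Real.exp_nonneg _)
      _ = C / m * (fockE ω n * Real.exp (-(2 * β) * fockE ω n)) := by ring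
  -- summability in hZ restated using fockE
  have hZ' : Summable fun n : ℕ →₀ ℕ => Real.exp (-(2 * β) * fockE ω n) := hZ
  have hG0 : ∀ n : ℕ →₀ ℕ,
      0 ≤ (∑ k ∈ n.support, ‖f k‖ ^ 2 * (n k : ℝ)) * Real.exp (-(2 * β) * fockE ω n) :=
    fun n => mul_nonneg (Finset.sum_nonneg fun k _ =>
      mul_nonneg (sq_nonneg _) (Nat.cast_nonneg _)) (Real.exp_nonneg _)
  have hpartial : ∀ F : Finset (ℕ →₀ ℕ),
      ∑ n ∈ F, (∑ k ∈ n.support, ‖f k‖ ^ 2 * (n k : ℝ)) * Real.exp (-(2 * β) * fockE ω n) ≤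
      C / m * (-(deriv (Ztr ω) (2 * β))) := by
    intro F
    calc ∑ n ∈ F, (∑ k ∈ n.support, ‖f k‖ ^ 2 * (n k : ℝ)) * Real.exp (-(2 * β) * fockE ω n)
        ≤ ∑ n ∈ F, C / m * (fockE ω n * Real.exp (-(2 * β) * fockE ω n)) :=
          Finset.sum_le_sum fun n _ => hbound n
      _ = C / m * ∑ n ∈ F, fockE ω n * Real.exp (-(2 * β) * fockE ω n) := by
          rw [Finset.mul_sum]
      _ ≤ C / m * (-(deriv (Ztr ω) (2 * β))) := by
          apply mul_le_mul_of_nonneg_left _ (div_nonneg hC0 hm.le)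
          exact deriv_bound ω β hβ hω0 hZ' hdiff F
  have heq : (∑' n : ℕ →₀ ℕ, ∑' x : ℕ →₀ ℕ, ‖fockAnn f (fockGibbs β ω (fockBasis n)) x‖ ^ 2) =
      ∑' n : ℕ →₀ ℕ, (∑ k ∈ n.support, ‖f k‖ ^ 2 * (n k : ℝ)) *
        Real.exp (-(2 * β) * fockE ω n) :=
    tsum_congr inner_eq
  rw [heq]
  exact Summable.tsum_le_of_sum_le (summable_of_sum_le hG0 hpartial) hpartial
end

section
/- Under the same setting, ‖a†(f) e^{−βH_B}‖²_HS ≤ ‖f‖² [ −(1/m)(d/d(2β)) + 1 ] Z(2β). -/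
open Filter Topology

/-!
Evaluated on the basis vector `|n⟩`, `a†(f) e^{−βH_B}` has the orthogonal components
`fₖ √(nₖ+1) e^{−βE(n)}` along `|n + δₖ⟩`, where `E(n) = ∑ₖ ωₖ nₖ`; hence its squared norm is
`∑ₖ |fₖ|² (nₖ+1) e^{−2βE(n)} ≤ ‖f‖² (1 + E(n)/m) e^{−2βE(n)}`, because `m nₖ ≤ ωₖ nₖ ≤ E(n)`.
Summing over `n` leaves `‖f‖² (Z(2β) + (1/m) ∑ₙ E(n) e^{−2βE(n)})`, and the last series is at most
`−Z'(2β)`: every partial sum of termwise derivatives bounds the derivative of `Z`, since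
all terms of `Z` decrease in `s`.
-/

noncomputable def fockEnergy (ω : ℕ → ℝ) (n : ℕ →₀ ℕ) : ℝ := n.sum fun k v => ω k * (v : ℝ)

lemma fockEnergy_nonneg {ω : ℕ → ℝ} (hω : ∀ k, 0 ≤ ω k) (n : ℕ →₀ ℕ) : 0 ≤ fockEnergy ω n :=
  Finset.sum_nonneg fun k _ => mul_nonneg (hω k) (Nat.cast_nonneg _)

lemma mul_apply_le_fockEnergy {ω : ℕ → ℝ} (hω : ∀ k, 0 ≤ ω k) (n : ℕ →₀ ℕ) (k : ℕ) :
    ω k * (n k : ℝ) ≤ fockEnergy ω n := by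
  by_cases hk : k ∈ n.support
  · exact Finset.single_le_sum (f := fun j => ω j * (n j : ℝ))
      (fun j _ => mul_nonneg (hω j) (Nat.cast_nonneg _)) hk
  · rw [Finsupp.notMem_support_iff.1 hk, Nat.cast_zero, mul_zero]
    exact fockEnergy_nonneg hω n

lemma fockCre_gibbs_basis_add_single (f : ℕ → ℂ) (β : ℝ) (ω : ℕ → ℝ) (n : ℕ →₀ ℕ) (k : ℕ) :
    fockCre f (fockGibbs β ω (fockBasis n)) (n + Finsupp.single k 1)
      = f k * (Real.sqrt ((n k : ℝ) + 1) : ℂ) * ((Real.exp (-β * fockEnergy ω n) : ℝ) : ℂ) := by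
  unfold fockCre fockGibbs fockBasis
  rw [tsum_eq_single k fun j hj => ?_]
  · simp [fockEnergy]
  · have hne : n + Finsupp.single k 1 - Finsupp.single j 1 ≠ n := fun h => by
      simpa [Finsupp.single_apply, hj] using DFunLike.congr_fun h k
    simp [hne]

lemma fockCre_gibbs_basis_of_ne (f : ℕ → ℂ) (β : ℝ) (ω : ℕ → ℝ) {n x : ℕ →₀ ℕ}
    (hx : ∀ k, x ≠ n + Finsupp.single k 1) :
    fockCre f (fockGibbs β ω (fockBasis n)) x = 0 := by
  refine (tsum_congr fun k => ?_).trans tsum_zero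
  by_cases h0 : x k = 0
  · simp [h0]
  · have hne : x - Finsupp.single k 1 ≠ n := by
      rintro rfl
      exact hx k (tsub_add_cancel_of_le (Finsupp.single_le_iff.2 (by omega))).symm
    simp [fockGibbs, fockBasis, hne]

lemma tsum_norm_sq_fockCre_gibbs_basis (f : ℕ → ℂ) (β : ℝ) (ω : ℕ → ℝ) (n : ℕ →₀ ℕ) :
    ∑' x, ‖fockCre f (fockGibbs β ω (fockBasis n)) x‖ ^ 2
      = ∑' k, ‖f k‖ ^ 2 * (((n k : ℝ) + 1) * Real.exp (-(2 * β) * fockEnergy ω n)) := by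
  have hinj : Function.Injective fun k => n + Finsupp.single k 1 := fun a b hab => by
    simpa using Finsupp.single_left_injective one_ne_zero (add_left_cancel hab)
  have hsupp : Function.support (fun x => ‖fockCre f (fockGibbs β ω (fockBasis n)) x‖ ^ 2)
      ⊆ Set.range fun k => n + Finsupp.single k 1 := fun x hx => by
    by_contra hxr
    exact hx (by simp [fockCre_gibbs_basis_of_ne f β ω fun k hk => hxr ⟨k, hk.symm⟩])
  rw [← hinj.tsum_eq hsupp]
  refine tsum_congr fun k => ?_
  have hexp : Real.exp (-β * fockEnergy ω n) ^ 2 = Real.exp (-(2 * β) * fockEnergy ω n) := by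
    rw [← Real.exp_nat_mul]; ring_nf
  simp only [fockCre_gibbs_basis_add_single, norm_mul, Complex.norm_real, Real.norm_eq_abs,
    abs_of_nonneg (Real.sqrt_nonneg _), abs_of_nonneg (Real.exp_pos _).le, mul_pow,
    Real.sq_sqrt (by positivity : (0 : ℝ) ≤ (n k : ℝ) + 1), hexp]
  ring

lemma tsum_norm_sq_fockCre_gibbs_basis_le {ω : ℕ → ℝ} {f : ℕ → ℂ} {m : ℝ} (β : ℝ) (hm : 0 < m)
    (hω : ∀ k, m ≤ ω k) (hf : Summable fun k => ‖f k‖ ^ 2) (n : ℕ →₀ ℕ) :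
    ∑' x, ‖fockCre f (fockGibbs β ω (fockBasis n)) x‖ ^ 2
      ≤ (∑' k, ‖f k‖ ^ 2) * (Real.exp (-(2 * β) * fockEnergy ω n)
          + 1 / m * (fockEnergy ω n * Real.exp (-(2 * β) * fockEnergy ω n))) := by
  have hmode (k : ℕ) : (n k : ℝ) + 1 ≤ 1 + fockEnergy ω n / m := by
    have := mul_apply_le_fockEnergy (fun j => hm.le.trans (hω j)) n k
    rw [add_comm, add_le_add_iff_left, le_div_iff₀ hm]
    nlinarith [hω k, (Nat.cast_nonneg (n k) : (0 : ℝ) ≤ n k)]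
  have hterm (k : ℕ) : ‖f k‖ ^ 2 * (((n k : ℝ) + 1) * Real.exp (-(2 * β) * fockEnergy ω n))
      ≤ ‖f k‖ ^ 2 * (Real.exp (-(2 * β) * fockEnergy ω n)
          + 1 / m * (fockEnergy ω n * Real.exp (-(2 * β) * fockEnergy ω n))) := by
    gcongr ‖f k‖ ^ 2 * ?_
    calc _ ≤ (1 + fockEnergy ω n / m) * Real.exp (-(2 * β) * fockEnergy ω n) :=
          mul_le_mul_of_nonneg_right (hmode k) (Real.exp_pos _).le
      _ = _ := by ring
  rw [tsum_norm_sq_fockCre_gibbs_basis, ← tsum_mul_right]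
  exact ((hf.mul_right _).of_nonneg_of_le (fun k => by positivity) hterm).tsum_le_tsum hterm
    (hf.mul_right _)

theorem deriv_tsum_le_sum_of_hasDerivAt {ι : Type*} {F : ι → ℝ → ℝ} {F' : ι → ℝ} {c : ℝ}
    (hF : ∀ i, HasDerivAt (F i) (F' i) c) (hdec : ∀ y, c < y → ∀ i, F i y ≤ F i c)
    (hsum : ∀ y, c ≤ y → Summable fun i => F i y)
    (hdiff : DifferentiableAt ℝ (fun s => ∑' i, F i s) c) (S : Finset ι) :
    deriv (fun s => ∑' i, F i s) c ≤ ∑ i ∈ S, F' i := by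
  have hright : 𝓝[>] c ≤ 𝓝[≠] c := nhdsWithin_mono _ fun y hy => ne_of_gt hy
  have hZ := (hasDerivAt_iff_tendsto_slope.mp hdiff.hasDerivAt).mono_left hright
  have hS := tendsto_finsetSum S fun i _ => (hasDerivAt_iff_tendsto_slope.mp (hF i)).mono_left hright
  refine le_of_tendsto_of_tendsto hZ hS (eventually_nhdsWithin_of_forall fun y (hy : c < y) => ?_)
  have hdrop : ∑ i ∈ S, (F i c - F i y) ≤ ∑' i, (F i c - F i y) :=
    ((hsum c le_rfl).sub (hsum y hy.le)).sum_le_tsum S fun i _ => sub_nonneg.2 (hdec y hy i)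
  simp only [slope_def_field, ← Finset.sum_div]
  rw [(hsum c le_rfl).tsum_sub (hsum y hy.le)] at hdrop
  rw [Finset.sum_sub_distrib] at hdrop ⊢
  exact div_le_div_of_nonneg_right (by linarith) (sub_pos.2 hy).le

theorem summable_mul_exp_neg_and_tsum_le_neg_deriv {ι : Type*} {E : ι → ℝ} {c : ℝ}
    (hE : ∀ i, 0 ≤ E i) (hZ : Summable fun i => Real.exp (-c * E i))
    (hdiff : DifferentiableAt ℝ (fun s => ∑' i, Real.exp (-s * E i)) c) :
    Summable (fun i => E i * Real.exp (-c * E i)) ∧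
      ∑' i, E i * Real.exp (-c * E i) ≤ -deriv (fun s => ∑' i, Real.exp (-s * E i)) c := by
  have hdec (y : ℝ) (hy : c ≤ y) (i : ι) : Real.exp (-y * E i) ≤ Real.exp (-c * E i) := by
    gcongr
    exact hE i
  have hderiv (i : ι) : HasDerivAt (fun s => Real.exp (-s * E i)) (-(E i * Real.exp (-c * E i))) c := by
    convert ((hasDerivAt_neg c).mul_const (E i)).exp using 1
    ring
  have hpartial (S : Finset ι) :
      ∑ i ∈ S, E i * Real.exp (-c * E i) ≤ -deriv (fun s => ∑' i, Real.exp (-s * E i)) c := by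
    have := deriv_tsum_le_sum_of_hasDerivAt hderiv (fun y hy => hdec y hy.le)
      (fun y hy => hZ.of_nonneg_of_le (fun i => (Real.exp_pos _).le) (hdec y hy)) hdiff S
    rw [Finset.sum_neg_distrib] at this
    linarith
  have hnonneg : 0 ≤ fun i => E i * Real.exp (-c * E i) := fun i => by
    have := hE i
    positivity
  exact ⟨summable_of_sum_le hnonneg hpartial, Real.tsum_le_of_sum_le hnonneg hpartial⟩

theorem hs_bound_cre_gibbs_general (ω : ℕ → ℝ) (f : ℕ → ℂ) (m β : ℝ) (hm : 0 < m) (hω : ∀ k, m ≤ ω k)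
    (hf : Summable fun k => ‖f k‖ ^ 2)
    (hZ : Summable fun n : ℕ →₀ ℕ => Real.exp (-(2 * β) * (n.sum fun k v => ω k * (v : ℝ))))
    (hdiff : DifferentiableAt ℝ (Ztr ω) (2 * β)) :
    (∑' n : ℕ →₀ ℕ, ∑' x : ℕ →₀ ℕ, ‖fockCre f (fockGibbs β ω (fockBasis n)) x‖ ^ 2) ≤
      (∑' k : ℕ, ‖f k‖ ^ 2) *
        ((1 / m) * (-(deriv (Ztr ω) (2 * β))) + Ztr ω (2 * β)) := by
  have hZ' : Summable fun n => Real.exp (-(2 * β) * fockEnergy ω n) := hZ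
  obtain ⟨hEs, hEle⟩ := summable_mul_exp_neg_and_tsum_le_neg_deriv
    (fockEnergy_nonneg fun k => hm.le.trans (hω k)) hZ' hdiff
  have hbound := tsum_norm_sq_fockCre_gibbs_basis_le β hm hω hf
  have hBs := (hZ'.add (hEs.mul_left (1 / m))).mul_left (∑' k, ‖f k‖ ^ 2)
  calc _ ≤ _ := (hBs.of_nonneg_of_le (fun n => tsum_nonneg fun x => sq_nonneg _) hbound).tsum_le_tsum
          hbound hBs
    _ = (∑' k, ‖f k‖ ^ 2) *
          (1 / m * ∑' n, fockEnergy ω n * Real.exp (-(2 * β) * fockEnergy ω n) + Ztr ω (2 * β)) := by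
      rw [tsum_mul_left, hZ'.tsum_add (hEs.mul_left _), tsum_mul_left, add_comm]
      rfl
    _ ≤ _ := by gcongr; exact hEle

/-- **Hilbert–Schmidt bound:** `‖a†(f) e^{−βH_B}‖²_HS ≤ ‖f‖² [ −(1/m)(d/d(2β)) + 1 ] Z(2β)`. -/
theorem hs_bound_cre_gibbs (ω : ℕ → ℝ) (f : ℕ → ℂ) (m β : ℝ) (hm : 0 < m) (hω : ∀ k, m ≤ ω k) (hβ : 0 < β)
    (hf : Summable fun k => ‖f k‖ ^ 2)
    (hsum : ∀ b > (0 : ℝ), Summable fun k => Real.exp (-b * ω k))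
    (hp : ∀ p : ℕ, p ≤ 2 → Summable fun k => ω k ^ p * Real.exp (-(2 * β) * ω k))
    (hZ : Summable fun n : ℕ →₀ ℕ => Real.exp (-(2 * β) * (n.sum fun k v => ω k * (v : ℝ))))
    (hdiff : DifferentiableAt ℝ (Ztr ω) (2 * β)) :
    (∑' n : ℕ →₀ ℕ, ∑' x : ℕ →₀ ℕ, ‖fockCre f (fockGibbs β ω (fockBasis n)) x‖ ^ 2) ≤
      (∑' k : ℕ, ‖f k‖ ^ 2) *
        ((1 / m) * (-(deriv (Ztr ω) (2 * β))) + Ztr ω (2 * β)) :=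
  hs_bound_cre_gibbs_general ω f m β hm hω hf hZ hdiff
end
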